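/- Let d ≥ 1, ω ≥ 0 and M > 0. Let 𝒜 = (A_k)_{k∈ℤ} be a sequence of linear isomorphisms of ℝ^d such that ‖A_k‖ ≤ M and ‖A_k⁻¹‖ ≤ M for all k ∈ ℤ. If 𝒜 is hyperbolic on both ℤ+ and ℤ− and B^+(𝒜) + B^−(𝒜) = ℝ^d, then 𝒜 has Perron property B_ω(ℤ): for every f ∈ N_ω(ℤ) there exists x ∈ N_ω(ℤ) with x_{k+1} = A_k x_k + f_{k+1} for all k ∈ ℤ. -/

import Mathlib

noncomputable section

open Filter Topology

/-- `ℝ^d`. -/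
abbrev Ed (d : ℕ) := EuclideanSpace ℝ (Fin d)

/-- The weight `(|k| + 1) ^ ω`. -/
noncomputable def wt (ω : ℝ) (k : ℤ) : ℝ := (|(k : ℝ)| + 1) ^ ω

/-- `PhiNat A l n = A (l+n-1) ∘ … ∘ A l`. -/
noncomputable def PhiNat {d : ℕ} (A : ℤ → (Ed d ≃L[ℝ] Ed d)) (l : ℤ) :
    ℕ → (Ed d ≃L[ℝ] Ed d)
  | 0 => ContinuousLinearEquiv.refl ℝ (Ed d)
  | n + 1 => (PhiNat A l n).trans (A (l + n))

/-- The Cauchy matrix `Φ_{m,l}`. -/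
noncomputable def Phi {d : ℕ} (A : ℤ → (Ed d ≃L[ℝ] Ed d)) (m l : ℤ) : Ed d ≃L[ℝ] Ed d :=
  if l ≤ m then PhiNat A l (m - l).toNat else (PhiNat A m (l - m).toNat).symm

/-- Hyperbolicity on `I` with explicit data. -/
def HyperbolicOnWith {d : ℕ} (A : ℤ → (Ed d ≃L[ℝ] Ed d)) (I : Set ℤ) (K lam : ℝ)
    (P Q : ℤ → (Ed d →L[ℝ] Ed d)) : Prop :=
  0 < K ∧ 0 < lam ∧ lam < 1 ∧
  (∀ k ∈ I, P k + Q k = 1) ∧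
  (∀ k ∈ I, (P k).comp (P k) = P k ∧ (Q k).comp (Q k) = Q k) ∧
  (∀ k ∈ I, IsCompl (LinearMap.range (P k : Ed d →ₗ[ℝ] Ed d)) (LinearMap.range (Q k : Ed d →ₗ[ℝ] Ed d))) ∧
  (∀ k ∈ I, k + 1 ∈ I →
      (A k) '' (LinearMap.range (P k : Ed d →ₗ[ℝ] Ed d) : Set (Ed d)) = (LinearMap.range (P (k + 1) : Ed d →ₗ[ℝ] Ed d) : Set (Ed d)) ∧
      (A k) '' (LinearMap.range (Q k : Ed d →ₗ[ℝ] Ed d) : Set (Ed d)) = (LinearMap.range (Q (k + 1) : Ed d →ₗ[ℝ] Ed d) : Set (Ed d))) ∧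
  (∀ l ∈ I, ∀ k ∈ I, l ≤ k → ∀ v ∈ LinearMap.range (P l : Ed d →ₗ[ℝ] Ed d),
      ‖(Phi A k l) v‖ ≤ K * lam ^ (k - l).toNat * ‖v‖) ∧
  (∀ l ∈ I, ∀ k ∈ I, k ≤ l → ∀ v ∈ LinearMap.range (Q l : Ed d →ₗ[ℝ] Ed d),
      ‖(Phi A k l) v‖ ≤ K * lam ^ (l - k).toNat * ‖v‖) ∧
  (∀ k ∈ I, ‖P k‖ ≤ K ∧ ‖Q k‖ ≤ K)

/-- The sequence `A` is hyperbolic on `I`. -/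
def IsHyperbolicOn {d : ℕ} (A : ℤ → (Ed d ≃L[ℝ] Ed d)) (I : Set ℤ) : Prop :=
  ∃ (K lam : ℝ) (P Q : ℤ → (Ed d →L[ℝ] Ed d)), HyperbolicOnWith A I K lam P Q

/-- Perron property `B_ω(ℤ+)`. -/
def PerronBPos {d : ℕ} (ω : ℝ) (A : ℤ → (Ed d ≃L[ℝ] Ed d)) : Prop :=
  ∀ f : ℤ → Ed d, f 0 = 0 → (∃ C : ℝ, ∀ k : ℤ, 0 ≤ k → ‖f k‖ * wt ω k ≤ C) →
    ∃ x : ℤ → Ed d, (∃ C : ℝ, ∀ k : ℤ, 0 ≤ k → ‖x k‖ * wt ω k ≤ C) ∧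
      ∀ k : ℤ, 0 ≤ k → x (k + 1) = A k (x k) + f (k + 1)

/-- Perron property `B_ω(ℤ)`. -/
def PerronBZ {d : ℕ} (ω : ℝ) (A : ℤ → (Ed d ≃L[ℝ] Ed d)) : Prop :=
  ∀ f : ℤ → Ed d, (∃ C : ℝ, ∀ k : ℤ, ‖f k‖ * wt ω k ≤ C) →
    ∃ x : ℤ → Ed d, (∃ C : ℝ, ∀ k : ℤ, ‖x k‖ * wt ω k ≤ C) ∧
      ∀ k : ℤ, x (k + 1) = A k (x k) + f (k + 1)

/-- `B^+(𝒜)`. -/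
def Bplus {d : ℕ} (A : ℤ → (Ed d ≃L[ℝ] Ed d)) : Set (Ed d) :=
  {v | Tendsto (fun k : ℤ => ‖(Phi A k 0) v‖) atTop (𝓝 0)}

/-- `B^-(𝒜)`. -/
def Bminus {d : ℕ} (A : ℤ → (Ed d ≃L[ℝ] Ed d)) : Set (Ed d) :=
  {v | Tendsto (fun k : ℤ => ‖(Phi A k 0) v‖) atBot (𝓝 0)}

/-!
On each half-line the dichotomy gives a solution through the Green function
`x k = ∑' j, G k j (f j)`, where `G k j = Φ k j ∘ P j` for `j ≤ k` and `G k j = -Φ k j ∘ Q j` for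
`j > k`. Since `‖G k j‖ ≤ K² λ^|k - j|` and the weight is submultiplicative,
`wt k ≤ wt j * wt (k - j)`, this solution lies in `N_ω` because `∑ₙ wt n λ^|n| < ∞`.

The two half-line solutions `x⁺`, `x⁻` need not agree at `0`. Write `x⁺ 0 - x⁻ 0 = v + w` with
`v ∈ B⁺` and `w ∈ B⁻`. The unstable component `u` of a vector of `B⁺` vanishes, because
`‖u‖ ≤ K ‖Φ k 0 u‖` for all `k ≥ 0` while `Φ k 0 u → 0`; so `v` is stable and `Φ k 0 v` decays
exponentially on `ℤ+`, and symmetrically `Φ k 0 w` on `ℤ−`. Then `x⁺ - Φ · 0 v` on `ℤ+` and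
`x⁻ + Φ · 0 w` on `ℤ−` glue to a solution in `N_ω(ℤ)`.
-/

section Cocycle

variable {d : ℕ} (A : ℤ → (Ed d ≃L[ℝ] Ed d))

lemma phiNat_succ_eq_trans (l : ℤ) (n : ℕ) :
    PhiNat A l (n + 1) = (A l).trans (PhiNat A (l + 1) n) := by
  induction n with
  | zero => refine ContinuousLinearEquiv.ext (funext fun x => ?_); simp [PhiNat]
  | succ n ih =>
    refine ContinuousLinearEquiv.ext (funext fun x => ?_)
    change A (l + (n + 1 : ℕ)) (PhiNat A l (n + 1) x) = A (l + 1 + n) (PhiNat A (l + 1) n (A l x))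
    rw [ih, show l + ((n + 1 : ℕ) : ℤ) = l + 1 + n by push_cast; ring]
    rfl

lemma phi_of_le {m l : ℤ} (h : l ≤ m) : Phi A m l = PhiNat A l (m - l).toNat := if_pos h

lemma phi_of_ge {m l : ℤ} (h : m ≤ l) : Phi A m l = (PhiNat A m (l - m).toNat).symm := by
  rcases h.eq_or_lt with rfl | h
  · simp [Phi, PhiNat]
  · exact if_neg (not_le.2 h)

@[simp]
lemma phi_self (k : ℤ) : Phi A k k = ContinuousLinearEquiv.refl ℝ (Ed d) := by
  simp [Phi, PhiNat]

lemma phi_succ (k l : ℤ) : Phi A (k + 1) l = (Phi A k l).trans (A k) := by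
  rcases le_or_gt l k with h | h
  · rw [phi_of_le A h, phi_of_le A (by omega), show (k + 1 - l).toNat = (k - l).toNat + 1 by omega,
      PhiNat, show l + ((k - l).toNat : ℤ) = k by omega]
  · rw [phi_of_ge A h.le, phi_of_ge A h, show (l - k).toNat = (l - (k + 1)).toNat + 1 by omega,
      phiNat_succ_eq_trans]
    refine ContinuousLinearEquiv.ext (funext fun x => ?_)
    simp

lemma phi_succ_apply (k l : ℤ) (u : Ed d) : Phi A (k + 1) l u = A k (Phi A k l u) := by
  rw [phi_succ]; rfl

lemma phi_symm (k l : ℤ) : (Phi A k l).symm = Phi A l k := by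
  rcases le_total l k with h | h
  · rw [phi_of_le A h, phi_of_ge A h]
  · rw [phi_of_ge A h, phi_of_le A h, ContinuousLinearEquiv.symm_symm]

lemma phi_apply_phi (k l : ℤ) (u : Ed d) : Phi A l k (Phi A k l u) = u := by
  rw [← phi_symm, ContinuousLinearEquiv.symm_apply_apply]

end Cocycle

section Weight

lemma wt_pos (ω : ℝ) (k : ℤ) : 0 < wt ω k := by
  unfold wt; positivity

lemma wt_natCast (ω : ℝ) (n : ℕ) : wt ω n = ((n : ℝ) + 1) ^ ω := by
  simp [wt]

lemma wt_neg (ω : ℝ) (k : ℤ) : wt ω (-k) = wt ω k := by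
  simp [wt]

lemma wt_le_mul_wt_sub {ω : ℝ} (hω : 0 ≤ ω) (k j : ℤ) : wt ω k ≤ wt ω j * wt ω (k - j) := by
  have hbase : |(k : ℝ)| + 1 ≤ (|(j : ℝ)| + 1) * (|((k - j : ℤ) : ℝ)| + 1) := by
    push_cast
    nlinarith [abs_sub_abs_le_abs_sub (k : ℝ) j, abs_nonneg (j : ℝ), abs_nonneg ((k : ℝ) - j)]
  unfold wt
  rw [← Real.mul_rpow (by positivity) (by positivity)]
  exact Real.rpow_le_rpow (by positivity) hbase hω

lemma summable_natCast_add_one_rpow_mul_pow (ω : ℝ) {lam : ℝ} (h0 : 0 < lam) (h1 : lam < 1) :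
    Summable (fun n : ℕ => ((n : ℝ) + 1) ^ ω * lam ^ n) := by
  obtain ⟨m, hm⟩ : ∃ m : ℕ, ω ≤ m := ⟨⌈ω⌉₊, Nat.le_ceil ω⟩
  have hpow : Summable (fun n : ℕ => ((n : ℝ) + 1) ^ m * lam ^ n) := by
    have hshift := (summable_nat_add_iff 1).2 <|
      summable_pow_mul_geometric_of_norm_lt_one m (r := lam) (by rwa [Real.norm_of_nonneg h0.le])
    refine (hshift.mul_right lam⁻¹).congr fun n => ?_
    push_cast
    field_simp
    ring
  refine hpow.of_nonneg_of_le (fun n => by positivity) fun n => ?_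
  rw [← Real.rpow_natCast ((n : ℝ) + 1) m]
  gcongr
  linarith [n.cast_nonneg (α := ℝ)]

lemma summable_wt_mul_pow_natAbs (ω : ℝ) {lam : ℝ} (h0 : 0 < lam) (h1 : lam < 1) :
    Summable (fun n : ℤ => wt ω n * lam ^ n.natAbs) := by
  have h := summable_natCast_add_one_rpow_mul_pow ω h0 h1
  refine .of_nat_of_neg ?_ ?_ <;> simpa [wt_neg, wt_natCast] using h

lemma mul_wt_le_of_le_mul_pow_natAbs {ω lam K a b : ℝ} (hω : 0 ≤ ω) (hK : 0 ≤ K) (h0 : 0 < lam)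
    (h1 : lam < 1) (hb : 0 ≤ b) {k l : ℤ} (ha : a ≤ K * lam ^ (k - l).natAbs * b) :
    a * wt ω k ≤ K * b * wt ω l * ∑' n : ℤ, wt ω n * lam ^ n.natAbs := by
  have hρ := summable_wt_mul_pow_natAbs ω h0 h1
  calc a * wt ω k ≤ (K * lam ^ (k - l).natAbs * b) * (wt ω l * wt ω (k - l)) :=
        mul_le_mul ha (wt_le_mul_wt_sub hω k l) (wt_pos ω k).le (by positivity)
    _ = K * b * wt ω l * (wt ω (k - l) * lam ^ (k - l).natAbs) := by ring
    _ ≤ K * b * wt ω l * ∑' n : ℤ, wt ω n * lam ^ n.natAbs := by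
        refine mul_le_mul_of_nonneg_left (hρ.le_tsum _ fun n _ => ?_) ?_
        · exact mul_nonneg (wt_pos ω n).le (by positivity)
        · exact mul_nonneg (mul_nonneg hK hb) (wt_pos ω l).le

end Weight

lemma eq_zero_of_tendsto_of_norm_le_mul {ι E : Type*} [NormedAddCommGroup E] [NormedSpace ℝ E]
    {L : Filter ι} [L.NeBot] (T : ι → E ≃L[ℝ] E) {s u : E} {K : ℝ}
    (hs : Tendsto (fun i => ‖T i s‖) L (𝓝 0)) (hsu : Tendsto (fun i => ‖T i (s + u)‖) L (𝓝 0))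
    (hu : ∀ᶠ i in L, ‖u‖ ≤ K * ‖T i u‖) : u = 0 := by
  have hTu : Tendsto (fun i => ‖T i u‖) L (𝓝 0) := by
    refine squeeze_zero (fun _ => norm_nonneg _) (fun i => ?_)
      (by simpa only [add_zero] using hsu.add hs)
    calc ‖T i u‖ = ‖T i (s + u) - T i s‖ := by rw [map_add, add_sub_cancel_left]
      _ ≤ ‖T i (s + u)‖ + ‖T i s‖ := norm_sub_le _ _
  have : ‖u‖ ≤ 0 := ge_of_tendsto (by simpa using hTu.const_mul K) hu
  exact norm_le_zero_iff.1 this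

section Solutions

variable {d : ℕ}

def IsSolutionOn (A : ℤ → (Ed d ≃L[ℝ] Ed d)) (f : ℤ → Ed d) (I : Set ℤ) (x : ℤ → Ed d) : Prop :=
  ∀ k ∈ I, k + 1 ∈ I → x (k + 1) = A k (x k) + f (k + 1)

def IsWeightedBoundedOn (ω : ℝ) (I : Set ℤ) (x : ℤ → Ed d) : Prop :=
  ∃ C : ℝ, ∀ k ∈ I, ‖x k‖ * wt ω k ≤ C

variable {A : ℤ → (Ed d ≃L[ℝ] Ed d)} {f : ℤ → Ed d} {ω : ℝ}

lemma IsSolutionOn.add_phi {x : ℤ → Ed d} {I : Set ℤ} (hx : IsSolutionOn A f I x) (l : ℤ)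
    (v : Ed d) : IsSolutionOn A f I (fun k => x k + Phi A k l v) := by
  intro k hk hk1
  simp only [hx k hk hk1, phi_succ_apply, map_add]
  abel

lemma IsSolutionOn.glue {x y : ℤ → Ed d} (hx : IsSolutionOn A f {k | 0 ≤ k} x)
    (hy : IsSolutionOn A f {k | k ≤ 0} y) (h0 : x 0 = y 0) :
    IsSolutionOn A f Set.univ (fun k => if 0 ≤ k then x k else y k) := by
  intro k _ _
  dsimp only
  rcases lt_trichotomy k (-1) with hk | rfl | hk
  · simp only [show ¬ 0 ≤ k + 1 by omega, show ¬ 0 ≤ k by omega, if_false]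
    exact hy k (show k ≤ 0 by omega) (show k + 1 ≤ 0 by omega)
  · simpa [h0] using hy (-1) (by simp) (by simp)
  · simp only [show 0 ≤ k + 1 by omega, show 0 ≤ k by omega, if_true]
    exact hx k (show 0 ≤ k by omega) (show 0 ≤ k + 1 by omega)

lemma IsWeightedBoundedOn.add {I : Set ℤ} {x y : ℤ → Ed d}
    (hx : IsWeightedBoundedOn ω I x) (hy : IsWeightedBoundedOn ω I y) :
    IsWeightedBoundedOn ω I (fun k => x k + y k) := by
  obtain ⟨C₁, hC₁⟩ := hx
  obtain ⟨C₂, hC₂⟩ := hy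
  refine ⟨C₁ + C₂, fun k hk => ?_⟩
  calc ‖x k + y k‖ * wt ω k ≤ (‖x k‖ + ‖y k‖) * wt ω k := by
        gcongr
        · exact (wt_pos ω k).le
        · exact norm_add_le _ _
    _ ≤ C₁ + C₂ := by linarith [hC₁ k hk, hC₂ k hk]

lemma IsWeightedBoundedOn.glue {x y : ℤ → Ed d} (hx : IsWeightedBoundedOn ω {k | 0 ≤ k} x)
    (hy : IsWeightedBoundedOn ω {k | k ≤ 0} y) :
    IsWeightedBoundedOn ω Set.univ (fun k => if 0 ≤ k then x k else y k) := by
  obtain ⟨C₁, hC₁⟩ := hx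
  obtain ⟨C₂, hC₂⟩ := hy
  refine ⟨max C₁ C₂, fun k _ => ?_⟩
  dsimp only
  split_ifs with hk
  · exact (hC₁ k hk).trans (le_max_left _ _)
  · exact (hC₂ k (show k ≤ 0 by omega)).trans (le_max_right _ _)

end Solutions

section Green

variable {d : ℕ} (A : ℤ → (Ed d ≃L[ℝ] Ed d)) (P Q : ℤ → (Ed d →L[ℝ] Ed d))

def green (k j : ℤ) : Ed d →L[ℝ] Ed d :=
  if j ≤ k then (Phi A k j : Ed d →L[ℝ] Ed d) ∘L P j else -((Phi A k j : Ed d →L[ℝ] Ed d) ∘L Q j)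

lemma green_succ_apply (k j : ℤ) (u : Ed d) :
    green A P Q (k + 1) j u =
      A k (green A P Q k j u) + if j = k + 1 then P j u + Q j u else 0 := by
  rcases lt_trichotomy j (k + 1) with h | rfl | h
  · simp [green, phi_succ_apply, show j ≤ k by omega, h.le, h.ne]
  · have hA : A k (Phi A k (k + 1) (Q (k + 1) u)) = Q (k + 1) u := by
      rw [← phi_succ_apply, phi_self]; rfl
    simp [green, hA]
  · simp [green, phi_succ_apply, show ¬ j ≤ k by omega, show ¬ j ≤ k + 1 by omega, h.ne']

end Green

namespace HyperbolicOnWith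

variable {d : ℕ} {A : ℤ → (Ed d ≃L[ℝ] Ed d)} {I : Set ℤ} {K lam ω : ℝ}
  {P Q : ℤ → (Ed d →L[ℝ] Ed d)}

local notation "range" T => LinearMap.range (T : Ed d →ₗ[ℝ] Ed d)

lemma add_apply (h : HyperbolicOnWith A I K lam P Q) {k : ℤ} (hk : k ∈ I) (u : Ed d) :
    P k u + Q k u = u := by
  obtain ⟨-, -, -, hPQ, -⟩ := h
  simpa using congr($(hPQ k hk) u)

lemma norm_green_apply_le (h : HyperbolicOnWith A I K lam P Q) {k j : ℤ} (hk : k ∈ I)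
    (hj : j ∈ I) (u : Ed d) : ‖green A P Q k j u‖ ≤ K * K * lam ^ (k - j).natAbs * ‖u‖ := by
  obtain ⟨hK, hlam, -, -, -, -, -, hP, hQ, hnorm⟩ := h
  unfold green
  split_ifs with hjk
  · calc ‖Phi A k j (P j u)‖ ≤ K * lam ^ (k - j).toNat * ‖P j u‖ := hP j hj k hk hjk _ ⟨u, rfl⟩
      _ ≤ K * lam ^ (k - j).natAbs * (K * ‖u‖) := by
          rw [show (k - j).toNat = (k - j).natAbs by omega]
          exact mul_le_mul_of_nonneg_left ((P j).le_of_opNorm_le (hnorm j hj).1 u) (by positivity)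
      _ = K * K * lam ^ (k - j).natAbs * ‖u‖ := by ring
  · calc ‖-Phi A k j (Q j u)‖ = ‖Phi A k j (Q j u)‖ := norm_neg _
      _ ≤ K * lam ^ (j - k).toNat * ‖Q j u‖ := hQ j hj k hk (by omega) _ ⟨u, rfl⟩
      _ ≤ K * lam ^ (k - j).natAbs * (K * ‖u‖) := by
          rw [show (j - k).toNat = (k - j).natAbs by omega]
          exact mul_le_mul_of_nonneg_left ((Q j).le_of_opNorm_le (hnorm j hj).2 u) (by positivity)
      _ = K * K * lam ^ (k - j).natAbs * ‖u‖ := by ring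

lemma norm_green_apply_indicator_mul_wt_le (hω : 0 ≤ ω) (h : HyperbolicOnWith A I K lam P Q)
    {f : ℤ → Ed d} {C : ℝ} (hC : ∀ k ∈ I, ‖f k‖ * wt ω k ≤ C) {k : ℤ} (hk : k ∈ I) (j : ℤ) :
    ‖green A P Q k j (I.indicator f j)‖ * wt ω k ≤
      K * K * C * (wt ω (k - j) * lam ^ (k - j).natAbs) := by
  obtain ⟨hK, hlam, -⟩ := id h
  have hρ : 0 ≤ wt ω (k - j) * lam ^ (k - j).natAbs := mul_nonneg (wt_pos ω _).le (by positivity)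
  by_cases hj : j ∈ I
  · calc ‖green A P Q k j (I.indicator f j)‖ * wt ω k
        ≤ (K * K * lam ^ (k - j).natAbs * ‖f j‖) * (wt ω j * wt ω (k - j)) := by
          rw [Set.indicator_of_mem hj f]
          exact mul_le_mul (h.norm_green_apply_le hk hj _) (wt_le_mul_wt_sub hω k j)
            (wt_pos ω k).le (by positivity)
      _ = K * K * (‖f j‖ * wt ω j) * (wt ω (k - j) * lam ^ (k - j).natAbs) := by ring
      _ ≤ K * K * C * (wt ω (k - j) * lam ^ (k - j).natAbs) := by gcongr; exact hC j hj
  · have hC0 : 0 ≤ C := (mul_nonneg (norm_nonneg _) (wt_pos ω k).le).trans (hC k hk)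
    rw [Set.indicator_of_notMem hj, map_zero, norm_zero, zero_mul]
    positivity

theorem exists_isSolutionOn (hω : 0 ≤ ω) (h : HyperbolicOnWith A I K lam P Q) {f : ℤ → Ed d}
    (hf : IsWeightedBoundedOn ω I f) : ∃ x, IsWeightedBoundedOn ω I x ∧ IsSolutionOn A f I x := by
  obtain ⟨C, hC⟩ := hf
  obtain ⟨-, hlam0, hlam1, -⟩ := id h
  -- `f` is cut off outside `I`, where `green` obeys no estimate
  set F := I.indicator f
  set S := ∑' n : ℤ, wt ω n * lam ^ n.natAbs
  have hterm (k : ℤ) (hk : k ∈ I) (j : ℤ) :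
      ‖green A P Q k j (F j)‖ ≤ K * K * C * (wt ω (k - j) * lam ^ (k - j).natAbs) / wt ω k :=
    (le_div_iff₀ (wt_pos ω k)).2 (h.norm_green_apply_indicator_mul_wt_le hω hC hk j)
  have hbound (k : ℤ) : HasSum (fun j => K * K * C * (wt ω (k - j) * lam ^ (k - j).natAbs) / wt ω k)
      (K * K * C * S / wt ω k) :=
    (((Equiv.subLeft k).hasSum_iff.2 (summable_wt_mul_pow_natAbs ω hlam0 hlam1).hasSum).mul_left
      (K * K * C)).div_const (wt ω k)
  have hsum (k : ℤ) (hk : k ∈ I) : Summable (fun j => green A P Q k j (F j)) :=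
    .of_norm_bounded (hbound k).summable (hterm k hk)
  refine ⟨fun k => ∑' j, green A P Q k j (F j), ⟨K * K * C * S, fun k hk => ?_⟩,
    fun k hk hk1 => ?_⟩
  · exact (le_div_iff₀ (wt_pos ω k)).1 (tsum_of_norm_bounded (hbound k) (hterm k hk))
  · have hjump (j : ℤ) : (if j = k + 1 then P j (F j) + Q j (F j) else 0) =
        if j = k + 1 then f (k + 1) else 0 := by
      split_ifs with hj
      · subst hj
        simpa [F, Set.indicator_of_mem hk1] using h.add_apply hk1 (F (k + 1))
      · rfl
    have hmap : Summable (fun j => A k (green A P Q k j (F j))) :=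
      (hsum k hk).mapL (A k : Ed d →L[ℝ] Ed d)
    simp only [green_succ_apply, hjump]
    rw [hmap.tsum_add (hasSum_ite_eq _ _).summable, tsum_ite_eq, ContinuousLinearEquiv.map_tsum]

lemma phi_mem_range_Q (h : HyperbolicOnWith A I K lam P Q) (hI : I.OrdConnected) {k l : ℤ}
    (hl : l ∈ I) (hk : k ∈ I) (hlk : l ≤ k) {u : Ed d} (hu : u ∈ range Q l) :
    Phi A k l u ∈ range Q k := by
  obtain ⟨-, -, -, -, -, -, hinv, -⟩ := h
  induction k, hlk using Int.leInduction with
  | base => simpa using hu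
  | succ k hlk ih =>
    have hkI : k ∈ I := hI.out hl hk ⟨hlk, by omega⟩
    rw [phi_succ_apply, ← SetLike.mem_coe, ← (hinv k hkI hk).2]
    exact Set.mem_image_of_mem _ (ih hkI)

lemma phi_mem_range_P (h : HyperbolicOnWith A I K lam P Q) (hI : I.OrdConnected) {k l : ℤ}
    (hl : l ∈ I) (hk : k ∈ I) (hkl : k ≤ l) {u : Ed d} (hu : u ∈ range P l) :
    Phi A k l u ∈ range P k := by
  obtain ⟨-, -, -, -, -, -, hinv, -⟩ := h
  induction k, hkl using Int.leInductionDown with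
  | base => simpa using hu
  | pred k hkl ih =>
    have hkI : k ∈ I := hI.out hk hl ⟨by omega, hkl⟩
    have hk' : k - 1 + 1 = k := by omega
    obtain ⟨y, hy, hAy⟩ : Phi A k l u ∈ (A (k - 1)) '' (range P (k - 1)) := by
      rw [(hinv (k - 1) hk (hk'.symm ▸ hkI)).1, hk']
      exact ih hkI
    have hy' : y = Phi A (k - 1) l u :=
      (A (k - 1)).injective (by rw [hAy, ← phi_succ_apply, hk'])
    rwa [← hy']

lemma norm_le_mul_norm_phi_of_mem_range_Q (h : HyperbolicOnWith A I K lam P Q)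
    (hI : I.OrdConnected) {k l : ℤ} (hl : l ∈ I) (hk : k ∈ I) (hlk : l ≤ k) {u : Ed d}
    (hu : u ∈ range Q l) : ‖u‖ ≤ K * ‖Phi A k l u‖ := by
  obtain ⟨hK, hlam0, hlam1, -, -, -, -, -, hQ, -⟩ := id h
  calc ‖u‖ = ‖Phi A l k (Phi A k l u)‖ := by rw [phi_apply_phi]
    _ ≤ K * lam ^ (k - l).toNat * ‖Phi A k l u‖ :=
        hQ k hk l hl hlk _ (h.phi_mem_range_Q hI hl hk hlk hu)
    _ ≤ K * ‖Phi A k l u‖ := by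
        gcongr
        exact mul_le_of_le_one_right hK.le (pow_le_one₀ hlam0.le hlam1.le)

lemma norm_le_mul_norm_phi_of_mem_range_P (h : HyperbolicOnWith A I K lam P Q)
    (hI : I.OrdConnected) {k l : ℤ} (hl : l ∈ I) (hk : k ∈ I) (hkl : k ≤ l) {u : Ed d}
    (hu : u ∈ range P l) : ‖u‖ ≤ K * ‖Phi A k l u‖ := by
  obtain ⟨hK, hlam0, hlam1, -, -, -, -, hP, -⟩ := id h
  calc ‖u‖ = ‖Phi A l k (Phi A k l u)‖ := by rw [phi_apply_phi]
    _ ≤ K * lam ^ (l - k).toNat * ‖Phi A k l u‖ :=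
        hP k hk l hl hkl _ (h.phi_mem_range_P hI hl hk hkl hu)
    _ ≤ K * ‖Phi A k l u‖ := by
        gcongr
        exact mul_le_of_le_one_right hK.le (pow_le_one₀ hlam0.le hlam1.le)

theorem mem_range_P_of_mem_bplus (h : HyperbolicOnWith A {k | 0 ≤ k} K lam P Q) {v : Ed d}
    (hv : v ∈ Bplus A) : v ∈ range P 0 := by
  obtain ⟨-, hlam0, hlam1, -, -, -, -, hP, -⟩ := id h
  have h0 : (0 : ℤ) ∈ {k : ℤ | 0 ≤ k} := le_refl (0 : ℤ)
  have hstable : Tendsto (fun k => ‖Phi A k 0 (P 0 v)‖) atTop (𝓝 0) := by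
    have hpow : Tendsto (fun k : ℤ => lam ^ (k - 0).toNat) atTop (𝓝 0) :=
      (tendsto_pow_atTop_nhds_zero_of_lt_one hlam0.le hlam1).comp
        (tendsto_atTop_atTop.2 fun n => ⟨n, fun k hk => by omega⟩)
    refine squeeze_zero' (.of_forall fun _ => norm_nonneg _)
      ((eventually_ge_atTop 0).mono fun k hk => hP 0 h0 k hk hk _ ⟨v, rfl⟩) ?_
    simpa using (hpow.const_mul K).mul_const ‖P 0 v‖
  have hQ0 : Q 0 v = 0 :=
    eq_zero_of_tendsto_of_norm_le_mul (Phi A · 0) hstable (by rwa [h.add_apply h0])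
      ((eventually_ge_atTop 0).mono fun k hk =>
        h.norm_le_mul_norm_phi_of_mem_range_Q Set.ordConnected_Ici h0 hk hk ⟨v, rfl⟩)
  exact ⟨v, by simpa [hQ0] using h.add_apply h0 v⟩

theorem mem_range_Q_of_mem_bminus (h : HyperbolicOnWith A {k | k ≤ 0} K lam P Q) {w : Ed d}
    (hw : w ∈ Bminus A) : w ∈ range Q 0 := by
  obtain ⟨-, hlam0, hlam1, -, -, -, -, -, hQ, -⟩ := id h
  have h0 : (0 : ℤ) ∈ {k : ℤ | k ≤ 0} := le_refl (0 : ℤ)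
  have hstable : Tendsto (fun k => ‖Phi A k 0 (Q 0 w)‖) atBot (𝓝 0) := by
    have hpow : Tendsto (fun k : ℤ => lam ^ (0 - k).toNat) atBot (𝓝 0) :=
      (tendsto_pow_atTop_nhds_zero_of_lt_one hlam0.le hlam1).comp
        (tendsto_atBot_atTop.2 fun n => ⟨-n, fun k hk => by omega⟩)
    refine squeeze_zero' (.of_forall fun _ => norm_nonneg _)
      ((eventually_le_atBot 0).mono fun k hk => hQ 0 h0 k hk hk _ ⟨w, rfl⟩) ?_
    simpa using (hpow.const_mul K).mul_const ‖Q 0 w‖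
  have hP0 : P 0 w = 0 :=
    eq_zero_of_tendsto_of_norm_le_mul (Phi A · 0) hstable (by rwa [add_comm, h.add_apply h0])
      ((eventually_le_atBot 0).mono fun k hk =>
        h.norm_le_mul_norm_phi_of_mem_range_P Set.ordConnected_Iic h0 hk hk ⟨w, rfl⟩)
  exact ⟨w, by simpa [hP0] using h.add_apply h0 w⟩

theorem isWeightedBoundedOn_phi_of_mem_range_P (hω : 0 ≤ ω) {l : ℤ}
    (h : HyperbolicOnWith A {k | l ≤ k} K lam P Q) {v : Ed d} (hv : v ∈ range P l) :
    IsWeightedBoundedOn ω {k | l ≤ k} (fun k => Phi A k l v) := by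
  obtain ⟨hK, hlam0, hlam1, -, -, -, -, hP, -⟩ := h
  refine ⟨_, fun k (hk : l ≤ k) => mul_wt_le_of_le_mul_pow_natAbs (l := l) hω hK.le hlam0 hlam1
    (norm_nonneg v) ?_⟩
  rw [show (k - l).natAbs = (k - l).toNat by omega]
  exact hP l (le_refl l) k hk hk v hv

theorem isWeightedBoundedOn_phi_of_mem_range_Q (hω : 0 ≤ ω) {l : ℤ}
    (h : HyperbolicOnWith A {k | k ≤ l} K lam P Q) {w : Ed d} (hw : w ∈ range Q l) :
    IsWeightedBoundedOn ω {k | k ≤ l} (fun k => Phi A k l w) := by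
  obtain ⟨hK, hlam0, hlam1, -, -, -, -, -, hQ, -⟩ := h
  refine ⟨_, fun k (hk : k ≤ l) => mul_wt_le_of_le_mul_pow_natAbs (l := l) hω hK.le hlam0 hlam1
    (norm_nonneg w) ?_⟩
  rw [show (k - l).natAbs = (l - k).toNat by omega]
  exact hQ l (le_refl l) k hk hk w hw

end HyperbolicOnWith

theorem hyperbolic_transverse_implies_perron_general (d : ℕ) (ω : ℝ)
    (hω : 0 ≤ ω)
    (A : ℤ → (Ed d ≃L[ℝ] Ed d))
    (hplus : IsHyperbolicOn A {k : ℤ | 0 ≤ k})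
    (hminus : IsHyperbolicOn A {k : ℤ | k ≤ 0})
    (htrans : ∀ u : Ed d, ∃ v ∈ Bplus A, ∃ w ∈ Bminus A, u = v + w) :
    ∀ f : ℤ → Ed d, (∃ C : ℝ, ∀ k : ℤ, ‖f k‖ * wt ω k ≤ C) →
      ∃ x : ℤ → Ed d, (∃ C : ℝ, ∀ k : ℤ, ‖x k‖ * wt ω k ≤ C) ∧
        ∀ k : ℤ, x (k + 1) = A k (x k) + f (k + 1) := by
  rintro f ⟨C, hf⟩
  obtain ⟨K₁, lam₁, P₁, Q₁, h₁⟩ := hplus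
  obtain ⟨K₂, lam₂, P₂, Q₂, h₂⟩ := hminus
  have hf' (I : Set ℤ) : IsWeightedBoundedOn ω I f := ⟨C, fun k _ => hf k⟩
  obtain ⟨xp, hxp_bdd, hxp⟩ := h₁.exists_isSolutionOn hω (hf' _)
  obtain ⟨xm, hxm_bdd, hxm⟩ := h₂.exists_isSolutionOn hω (hf' _)
  obtain ⟨v, hv, w, hw, hvw⟩ := htrans (xp 0 - xm 0)
  have hv' := neg_mem (h₁.mem_range_P_of_mem_bplus hv)
  have hw' := h₂.mem_range_Q_of_mem_bminus hw
  have h0 : xp 0 + Phi A 0 0 (-v) = xm 0 + Phi A 0 0 w := by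
    rw [phi_self]
    change xp 0 + -v = xm 0 + w
    rw [sub_eq_iff_eq_add'.1 hvw]
    abel
  refine ⟨fun k => if 0 ≤ k then xp k + Phi A k 0 (-v) else xm k + Phi A k 0 w, ?_, ?_⟩
  · obtain ⟨C', hC'⟩ := (hxp_bdd.add (h₁.isWeightedBoundedOn_phi_of_mem_range_P hω hv')).glue
      (hxm_bdd.add (h₂.isWeightedBoundedOn_phi_of_mem_range_Q hω hw'))
    exact ⟨C', fun k => hC' k trivial⟩
  · exact fun k => ((hxp.add_phi 0 (-v)).glue (hxm.add_phi 0 w) h0) k trivial trivial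

/-- hyperbolicity on both half-lines plus transversality implies B_ω(ℤ). -/
theorem hyperbolic_transverse_implies_perron (d : ℕ) (hd : 1 ≤ d) (ω M : ℝ)
    (hω : 0 ≤ ω) (hM : 0 < M)
    (A : ℤ → (Ed d ≃L[ℝ] Ed d))
    (hA : ∀ k : ℤ, ‖(A k : Ed d →L[ℝ] Ed d)‖ ≤ M ∧
      ‖((A k).symm : Ed d →L[ℝ] Ed d)‖ ≤ M)
    (hplus : IsHyperbolicOn A {k : ℤ | 0 ≤ k})
    (hminus : IsHyperbolicOn A {k : ℤ | k ≤ 0})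
    (htrans : ∀ u : Ed d, ∃ v ∈ Bplus A, ∃ w ∈ Bminus A, u = v + w) :
    ∀ f : ℤ → Ed d, (∃ C : ℝ, ∀ k : ℤ, ‖f k‖ * wt ω k ≤ C) →
      ∃ x : ℤ → Ed d, (∃ C : ℝ, ∀ k : ℤ, ‖x k‖ * wt ω k ≤ C) ∧
        ∀ k : ℤ, x (k + 1) = A k (x k) + f (k + 1) :=
  hyperbolic_transverse_implies_perron_general d ω hω A hplus hminus htrans
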